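/- arXiv:1810.01768 — 6 statements merged into one kernel-verified Lean document; each statement's English description precedes it below -/
import Mathlib

section
/- If f is an entire function such that Re(f(z)) ≤ a|z|² + b for all complex z (with a, b real constants), then f is a polynomial of degree at most 2. -/
/-!
Borel–Carathéodory on the ball of radius `2R` turns the one-sided bound on `Re f` into a
two-sided bound `‖f z‖ = O(R ^ d)` on the circle `‖z‖ = R`. Cauchy's estimates then force every
Taylor coefficient of order `n > d` at the origin to be `O(R ^ (d - n))`, hence zero, so the
Taylor series of `f` is a polynomial of degree at most `d`.
-/

open Metric Filter Topology Polynomial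

namespace Complex

theorem norm_le_of_mem_sphere_of_re_le_on_ball_two_mul {f : ℂ → ℂ} {M R : ℝ} {z : ℂ}
    (hM : 0 < M) (hR : 0 < R) (hf : DifferentiableOn ℂ f (ball 0 (2 * R)))
    (hre : Set.MapsTo f (ball 0 (2 * R)) {w | w.re ≤ M}) (hz : z ∈ sphere 0 R) :
    ‖f z‖ ≤ 2 * M + 3 * ‖f 0‖ := by
  have hzR : ‖z‖ = R := mem_sphere_zero_iff_norm.mp hz
  have hz2 : z ∈ ball 0 (2 * R) := mem_ball_zero_iff.mpr (by linarith)
  calc ‖f z‖ ≤ 2 * M * ‖z‖ / (2 * R - ‖z‖) + ‖f 0‖ * (2 * R + ‖z‖) / (2 * R - ‖z‖) :=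
        borelCaratheodory hM hf hre (by linarith) hz2
    _ = 2 * M + 3 * ‖f 0‖ := by rw [hzR]; field_simp; ring

end Complex

namespace Differentiable

theorem exists_norm_le_mul_pow_of_re_le {f : ℂ → ℂ}
    (hf : Differentiable ℂ f) {a b : ℝ} {d : ℕ} (hle : ∀ z, (f z).re ≤ a * ‖z‖ ^ d + b) :
    ∃ C, ∀ R ≥ 1, ∀ z ∈ sphere (0 : ℂ) R, ‖f z‖ ≤ C * R ^ d := by
  refine ⟨2 * (|a| * 2 ^ d + |b| + 1) + 3 * ‖f 0‖, fun R hR z hz => ?_⟩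
  have hRd : 1 ≤ R ^ d := one_le_pow₀ hR
  set M := |a| * (2 * R) ^ d + |b| + 1
  have hM : 0 < M := by positivity
  have hre : Set.MapsTo f (ball 0 (2 * R)) {w | w.re ≤ M} := fun w hw => by
    have hwd : ‖w‖ ^ d ≤ (2 * R) ^ d :=
      pow_le_pow_left₀ (norm_nonneg w) (mem_ball_zero_iff.mp hw).le d
    calc (f w).re ≤ a * ‖w‖ ^ d + b := hle w
      _ ≤ |a| * (2 * R) ^ d + |b| + 1 := by
        nlinarith [le_abs_self a, le_abs_self b, abs_nonneg a, pow_nonneg (norm_nonneg w) d]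
  calc ‖f z‖ ≤ 2 * M + 3 * ‖f 0‖ :=
        Complex.norm_le_of_mem_sphere_of_re_le_on_ball_two_mul hM (by linarith)
          hf.differentiableOn hre hz
    _ ≤ (2 * (|a| * 2 ^ d + |b| + 1) + 3 * ‖f 0‖) * R ^ d := by
      simp only [M, mul_pow]
      nlinarith [abs_nonneg a, abs_nonneg b, norm_nonneg (f 0), pow_pos (two_pos (α := ℝ)) d]

theorem iteratedDeriv_eq_zero_of_norm_le_mul_pow
    {F : Type*} [NormedAddCommGroup F] [NormedSpace ℂ F] [CompleteSpace F] {f : ℂ → F}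
    (hf : Differentiable ℂ f) {C : ℝ} {d n : ℕ} (hdn : d < n)
    (hC : ∀ R ≥ 1, ∀ z ∈ sphere (0 : ℂ) R, ‖f z‖ ≤ C * R ^ d) :
    iteratedDeriv n f 0 = 0 := by
  have hbound : ∀ R ≥ 1, ‖iteratedDeriv n f 0‖ ≤ n.factorial * C / R ^ (n - d) := fun R hR => by
    have hR0 : 0 < R := by linarith
    calc ‖iteratedDeriv n f 0‖ ≤ n.factorial * (C * R ^ d) / R ^ n :=
          Complex.norm_iteratedDeriv_le_of_forall_mem_sphere_norm_le n hR0 hf.diffContOnCl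
            (hC R hR)
      _ = n.factorial * C / R ^ (n - d) := by
        rw [← Nat.sub_add_cancel hdn.le, pow_add]; field_simp; simp
  have htends : Tendsto (fun R : ℝ => n.factorial * C / R ^ (n - d)) atTop (𝓝 0) :=
    tendsto_const_nhds.div_atTop (tendsto_pow_atTop (by omega))
  exact norm_le_zero_iff.mp <|
    ge_of_tendsto htends (eventually_atTop.2 ⟨1, hbound⟩)

theorem exists_polynomial_of_iteratedDeriv_eq_zero {f : ℂ → ℂ}
    (hf : Differentiable ℂ f) {d : ℕ} (hd : ∀ n, d < n → iteratedDeriv n f 0 = 0) :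
    ∃ Q : ℂ[X], Q.degree ≤ d ∧ ∀ z, f z = Q.eval z := by
  refine ⟨∑ k ∈ Finset.range (d + 1), C ((k.factorial : ℂ)⁻¹ * iteratedDeriv k f 0) * X ^ k,
    ?_, fun z => ?_⟩
  · refine (degree_sum_le _ _).trans (Finset.sup_le fun k hk => ?_)
    exact (degree_C_mul_X_pow_le k _).trans (by exact_mod_cast Finset.mem_range_succ_iff.mp hk)
  · rw [← Complex.taylorSeries_eq_of_entire' 0 z hf, tsum_eq_sum (s := Finset.range (d + 1)),
      eval_finsetSum]
    · simp
    · intro k hk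
      rw [hd k (by simpa using hk)]
      ring

theorem exists_polynomial_of_re_le_mul_pow {f : ℂ → ℂ}
    (hf : Differentiable ℂ f) {a b : ℝ} {d : ℕ} (hle : ∀ z, (f z).re ≤ a * ‖z‖ ^ d + b) :
    ∃ Q : ℂ[X], Q.degree ≤ d ∧ ∀ z, f z = Q.eval z :=
  let ⟨_, hC⟩ := hf.exists_norm_le_mul_pow_of_re_le hle
  hf.exists_polynomial_of_iteratedDeriv_eq_zero fun _ hn =>
    hf.iteratedDeriv_eq_zero_of_norm_le_mul_pow hn hC

end Differentiable

theorem entire_re_quadratic_bound_is_poly_deg_two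
    (f : ℂ → ℂ) (hf : Differentiable ℂ f) (a b : ℝ)
    (hle : ∀ z : ℂ, (f z).re ≤ a * ‖z‖ ^ 2 + b) :
    ∃ Q : Polynomial ℂ, Q.degree ≤ 2 ∧ ∀ z : ℂ, f z = Q.eval z :=
  hf.exists_polynomial_of_re_le_mul_pow hle
end

section
/- For a real random variable X and η ≠ 0, if E[exp(η² X²)] is finite then the extended characteristic function ζ ↦ E[exp(i ζ X)] is well-defined on all of ℂ and satisfies |E[exp(i ζ X)]| ≤ exp(η⁻² |ζ|²) · E[exp(η² X²)]. -/
/-!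
Young's inequality `|ζ| |x| ≤ η⁻² |ζ|² + η² x²` bounds `|exp (i ζ x)| = exp (-(Im ζ) x)` pointwise by
`exp (η⁻² |ζ|²) · exp (η² x²)`, an integrable function; domination gives integrability of
`x ↦ exp (i ζ x)` and the bound on its integral.
-/

open MeasureTheory Complex

lemma mul_le_inv_sq_mul_sq_add_sq_mul_sq {a : ℝ} (ha : a ≠ 0) (b c : ℝ) :
    b * c ≤ (a ^ 2)⁻¹ * b ^ 2 + a ^ 2 * c ^ 2 := by
  have hsq : (b / a) ^ 2 = (a ^ 2)⁻¹ * b ^ 2 := by rw [div_pow]; ring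
  have hprod : (b / a) * (a * c) = b * c := by field_simp
  nlinarith [two_mul_le_add_sq (b / a) (a * c), sq_nonneg (b / a), sq_nonneg (a * c)]

lemma Complex.norm_exp_I_mul_mul_ofReal_le {η : ℝ} (hη : η ≠ 0) (ζ : ℂ) (x : ℝ) :
    ‖exp (I * ζ * x)‖ ≤ Real.exp (η ^ (-2 : ℤ) * ‖ζ‖ ^ 2) * Real.exp (η ^ 2 * x ^ 2) := by
  have hre : (I * ζ * x).re = -ζ.im * x := by simp [mul_comm]
  rw [norm_exp, hre, ← Real.exp_add, zpow_neg, zpow_ofNat]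
  gcongr
  calc -ζ.im * x ≤ |ζ.im| * |x| := (le_abs_self _).trans_eq (by rw [abs_mul, abs_neg])
    _ ≤ ‖ζ‖ * |x| := by gcongr; exact abs_im_le_norm ζ
    _ ≤ (η ^ 2)⁻¹ * ‖ζ‖ ^ 2 + η ^ 2 * |x| ^ 2 := mul_le_inv_sq_mul_sq_add_sq_mul_sq hη _ _
    _ = (η ^ 2)⁻¹ * ‖ζ‖ ^ 2 + η ^ 2 * x ^ 2 := by rw [sq_abs]

theorem charFun_complex_welldefined_and_bound_general
    (μ : Measure ℝ) (η : ℝ) (hη : η ≠ 0)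
    (hint : Integrable (fun x : ℝ => Real.exp (η ^ 2 * x ^ 2)) μ) :
    ∀ ζ : ℂ, Integrable (fun x : ℝ => Complex.exp (I * ζ * x)) μ ∧
      ‖∫ x : ℝ, Complex.exp (I * ζ * x) ∂μ‖ ≤
        Real.exp (η ^ (-2 : ℤ) * ‖ζ‖ ^ 2) *
          ∫ x : ℝ, Real.exp (η ^ 2 * x ^ 2) ∂μ := by
  intro ζ
  have hbound : ∀ᵐ x : ℝ ∂μ, ‖exp (I * ζ * x)‖ ≤
      Real.exp (η ^ (-2 : ℤ) * ‖ζ‖ ^ 2) * Real.exp (η ^ 2 * x ^ 2) :=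
    .of_forall (norm_exp_I_mul_mul_ofReal_le hη ζ)
  have hdom := hint.const_mul (Real.exp (η ^ (-2 : ℤ) * ‖ζ‖ ^ 2))
  refine ⟨hdom.mono' (by fun_prop) hbound, ?_⟩
  rw [← integral_const_mul]
  exact norm_integral_le_of_norm_le hdom hbound

theorem charFun_complex_welldefined_and_bound
    (μ : Measure ℝ) [IsProbabilityMeasure μ] (η : ℝ) (hη : η ≠ 0)
    (hint : Integrable (fun x : ℝ => Real.exp (η ^ 2 * x ^ 2)) μ) :
    ∀ ζ : ℂ, Integrable (fun x : ℝ => Complex.exp (I * ζ * x)) μ ∧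
      ‖∫ x : ℝ, Complex.exp (I * ζ * x) ∂μ‖ ≤
        Real.exp (η ^ (-2 : ℤ) * ‖ζ‖ ^ 2) *
          ∫ x : ℝ, Real.exp (η ^ 2 * x ^ 2) ∂μ :=
  charFun_complex_welldefined_and_bound_general μ η hη hint
end

section
/- For a real random variable X and η ≠ 0 with E[exp(η² X²)] < ∞, the complex characteristic function ζ ↦ E[exp(i ζ X)] is an entire function of ζ. -/
/-! Since `t x ≤ η² x² + t² / (4 η²)`, the hypothesis makes `exp (t x)` integrable for every real
`t`. The complex moment generating function `z ↦ ∫ exp (z x) dμ` is holomorphic on the strip where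
`exp (Re z · x)` is integrable, here all of `ℂ`, and the characteristic function is `ζ ↦ M(i ζ)`. -/

open MeasureTheory Complex ProbabilityTheory

lemma mul_le_sq_mul_sq_add_sq_div {η : ℝ} (hη : η ≠ 0) (t x : ℝ) :
    t * x ≤ η ^ 2 * x ^ 2 + t ^ 2 / (4 * η ^ 2) := by
  have hη4 : 0 < 4 * η ^ 2 := by positivity
  rw [← sub_le_iff_le_add', le_div_iff₀ hη4]
  nlinarith [sq_nonneg (2 * η ^ 2 * x - t)]

lemma integrableExpSet_eq_univ_of_integrable_exp_sq {Ω : Type*} {mΩ : MeasurableSpace Ω}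
    {μ : Measure Ω} {X : Ω → ℝ} (hX : AEMeasurable X μ) {η : ℝ} (hη : η ≠ 0)
    (hint : Integrable (fun ω => Real.exp (η ^ 2 * X ω ^ 2)) μ) :
    integrableExpSet X μ = Set.univ := by
  refine Set.eq_univ_of_forall fun t => ?_
  refine (hint.mul_const (Real.exp (t ^ 2 / (4 * η ^ 2)))).mono
    (by fun_prop) (ae_of_all _ fun ω => ?_)
  simp only [Real.norm_eq_abs, Real.abs_exp, ← Real.exp_add]
  exact Real.exp_le_exp.mpr (mul_le_sq_mul_sq_add_sq_div hη t (X ω))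

lemma differentiable_complexMGF_of_integrableExpSet_eq_univ {Ω : Type*} {mΩ : MeasurableSpace Ω}
    {μ : Measure Ω} {X : Ω → ℝ} (h : integrableExpSet X μ = Set.univ) :
    Differentiable ℂ (complexMGF X μ) := by
  simpa [h, ← differentiableOn_univ] using differentiableOn_complexMGF (X := X) (μ := μ)

theorem charFun_complex_entire_general
    (μ : Measure ℝ) (η : ℝ) (hη : η ≠ 0)
    (hint : Integrable (fun x : ℝ => Real.exp (η ^ 2 * x ^ 2)) μ) :
    Differentiable ℂ (fun ζ : ℂ => ∫ x : ℝ, Complex.exp (I * ζ * x) ∂μ) := by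
  have hM : Differentiable ℂ (complexMGF id μ) :=
    differentiable_complexMGF_of_integrableExpSet_eq_univ
      (integrableExpSet_eq_univ_of_integrable_exp_sq aemeasurable_id hη hint)
  exact hM.comp (differentiable_id.const_mul I)

theorem charFun_complex_entire
    (μ : Measure ℝ) [IsProbabilityMeasure μ] (η : ℝ) (hη : η ≠ 0)
    (hint : Integrable (fun x : ℝ => Real.exp (η ^ 2 * x ^ 2)) μ) :
    Differentiable ℂ (fun ζ : ℂ => ∫ x : ℝ, Complex.exp (I * ζ * x) ∂μ) :=
  charFun_complex_entire_general μ η hη hint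
end

section
/- Let φ be the characteristic function of a symmetric real random variable X₁ such that X₁+X₂ and X₁−X₂ are independent where X₂ is an independent copy of X₁. Then φ satisfies the functional equation φ(2t) = φ(t)³ · conj(φ(t)) for all real t. -/
open MeasureTheory ProbabilityTheory Complex

private lemma exp_cont (a : ℝ) : Continuous (fun x : ℝ => Complex.exp (I * a * x)) := by
  fun_prop

/-- change of variables for the char-fun integrand -/
private lemma cov {Ω : Type*} [MeasureSpace Ω] (Y : Ω → ℝ) (hY : Measurable Y) (a : ℝ) :
    ∫ ω, Complex.exp (I * a * Y ω) ∂ℙ = ∫ x, Complex.exp (I * a * x) ∂(Measure.map Y ℙ) := by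
  rw [integral_map hY.aemeasurable ((exp_cont a).aestronglyMeasurable)]

private lemma indep_mul {Ω : Type*} [MeasureSpace Ω] [IsProbabilityMeasure (ℙ : Measure Ω)]
    (U V : Ω → ℝ) (hU : Measurable U) (hV : Measurable V) (h : IndepFun U V ℙ) (a b : ℝ) :
    ∫ ω, Complex.exp (I * a * U ω) * Complex.exp (I * b * V ω) ∂ℙ
      = (∫ ω, Complex.exp (I * a * U ω) ∂ℙ) * ∫ ω, Complex.exp (I * b * V ω) ∂ℙ := by
  have hmap := (indepFun_iff_map_prod_eq_prod_map_map hU.aemeasurable hV.aemeasurable).1 h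
  have h1 : ∫ ω, Complex.exp (I * a * U ω) * Complex.exp (I * b * V ω) ∂ℙ
      = ∫ p : ℝ × ℝ, Complex.exp (I * a * p.1) * Complex.exp (I * b * p.2)
        ∂(Measure.map (fun ω => (U ω, V ω)) ℙ) := by
    rw [integral_map (hU.prodMk hV).aemeasurable]
    exact (((exp_cont a).comp continuous_fst).mul
      ((exp_cont b).comp continuous_snd)).aestronglyMeasurable
  rw [h1, hmap, integral_prod_mul (fun x : ℝ => Complex.exp (I * a * x))
    (fun x : ℝ => Complex.exp (I * b * x)), ← cov U hU a, ← cov V hV b]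

theorem charFun_functional_equation
    {Ω : Type*} [MeasureSpace Ω] [IsProbabilityMeasure (ℙ : Measure Ω)]
    (X₁ X₂ : Ω → ℝ) (hX₁ : Measurable X₁) (hX₂ : Measurable X₂)
    (hindep : IndepFun X₁ X₂ ℙ)
    (hid : Measure.map X₁ ℙ = Measure.map X₂ ℙ)
    (hsym₁ : Measure.map (fun ω => -X₁ ω) ℙ = Measure.map X₁ ℙ)
    (hsym₂ : Measure.map (fun ω => -X₂ ω) ℙ = Measure.map X₂ ℙ)
    (hindep2 : IndepFun (fun ω => X₁ ω + X₂ ω) (fun ω => X₁ ω - X₂ ω) ℙ)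
    (φ : ℝ → ℂ) (hφ : ∀ t : ℝ, φ t = ∫ ω, Complex.exp (I * t * X₁ ω) ∂ℙ) :
    ∀ t : ℝ, φ (2 * t) = φ t ^ 3 * starRingEnd ℂ (φ t) := by
  intro t
  -- ∫ exp(I t X₂) = φ t
  have hX2 : ∫ ω, Complex.exp (I * t * X₂ ω) ∂ℙ = φ t := by
    rw [cov X₂ hX₂ t, ← hid, ← cov X₁ hX₁ t, hφ]
  -- ∫ exp(I (-t) X₂) = φ t
  have hX2neg : ∫ ω, Complex.exp (I * (-t : ℝ) * X₂ ω) ∂ℙ = φ t := by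
    have : ∫ ω, Complex.exp (I * (-t : ℝ) * X₂ ω) ∂ℙ
        = ∫ ω, Complex.exp (I * t * (-X₂ ω : ℝ)) ∂ℙ := by
      congr 1; ext ω; congr 1; push_cast; ring
    rw [this, cov (fun ω => -X₂ ω) hX₂.neg t, hsym₂, ← hid, ← cov X₁ hX₁ t, hφ]
  -- conj (φ t) = φ t  (symmetry)
  have hconj : starRingEnd ℂ (φ t) = φ t := by
    rw [hφ t, ← integral_conj]
    have : ∀ ω, starRingEnd ℂ (Complex.exp (I * t * X₁ ω))
        = Complex.exp (I * t * (-X₁ ω : ℝ)) := by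
      intro ω
      rw [← Complex.exp_conj]
      congr 1
      push_cast [map_mul, Complex.conj_I, Complex.conj_ofReal]
      ring
    simp_rw [this]
    rw [cov (fun ω => -X₁ ω) hX₁.neg t, hsym₁, ← cov X₁ hX₁ t]
  -- sum: ∫ exp(I t (X₁+X₂)) = φ t * φ t
  have hS : ∫ ω, Complex.exp (I * t * ((X₁ ω + X₂ ω : ℝ) : ℂ)) ∂ℙ = φ t * φ t := by
    have h1 : ∀ ω, Complex.exp (I * t * ((X₁ ω + X₂ ω : ℝ) : ℂ))
        = Complex.exp (I * t * X₁ ω) * Complex.exp (I * t * X₂ ω) := by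
      intro ω; rw [← Complex.exp_add]; congr 1; push_cast; ring
    simp_rw [h1]
    rw [indep_mul X₁ X₂ hX₁ hX₂ hindep t t, hX2, hφ]
  -- diff: ∫ exp(I t (X₁−X₂)) = φ t * φ t
  have hD : ∫ ω, Complex.exp (I * t * ((X₁ ω - X₂ ω : ℝ) : ℂ)) ∂ℙ = φ t * φ t := by
    have h1 : ∀ ω, Complex.exp (I * t * ((X₁ ω - X₂ ω : ℝ) : ℂ))
        = Complex.exp (I * t * X₁ ω) * Complex.exp (I * (-t : ℝ) * X₂ ω) := by
      intro ω; rw [← Complex.exp_add]; congr 1; push_cast; ring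
    simp_rw [h1]
    rw [indep_mul X₁ X₂ hX₁ hX₂ hindep t (-t), hX2neg, hφ]
  -- main
  have hmain : φ (2 * t) = (φ t * φ t) * (φ t * φ t) := by
    rw [hφ (2 * t)]
    have h1 : ∀ ω, Complex.exp (I * ((2 : ℝ) * t : ℝ) * X₁ ω)
        = Complex.exp (I * t * ((X₁ ω + X₂ ω : ℝ) : ℂ))
          * Complex.exp (I * t * ((X₁ ω - X₂ ω : ℝ) : ℂ)) := by
      intro ω; rw [← Complex.exp_add]; congr 1; push_cast; ring
    simp_rw [h1]
    rw [indep_mul (fun ω => X₁ ω + X₂ ω) (fun ω => X₁ ω - X₂ ω) (hX₁.add hX₂)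
      (hX₁.sub hX₂) hindep2 t t]
    rw [hS, hD]
  rw [hmain, hconj]; ring
end

section
/- Let φ : ℝ → ℂ be a characteristic function (continuous, φ(0) = 1) satisfying φ(2t) = φ(t)³ conj(φ(t)) for all t. Then φ(t) ≠ 0 for all t ∈ ℝ. -/
/-! Since `φ (2s) = ‖φ s‖² φ s²`, a zero of `φ` at `t` is also a zero at every `t / 2ⁿ`;
letting `n → ∞`, continuity would force `φ 0 = 0`. -/

open Filter Topology

theorem tendsto_div_two_pow_atTop_nhds_zero (t : ℝ) :
    Tendsto (fun n : ℕ => t / 2 ^ n) atTop (𝓝 0) :=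
  (tendsto_pow_atTop_atTop_of_one_lt one_lt_two).const_div_atTop t

section HalvingZeros

variable {M : Type*} [Zero M] {φ : ℝ → M}

theorem apply_div_two_pow_eq_zero (hφ : ∀ s, φ (2 * s) = 0 → φ s = 0) {t : ℝ}
    (ht : φ t = 0) (n : ℕ) : φ (t / 2 ^ n) = 0 := by
  induction n with
  | zero => simpa using ht
  | succ n ih =>
    apply hφ
    rwa [pow_succ, ← div_div, mul_div_cancel₀ _ two_ne_zero]

theorem Continuous.apply_ne_zero_of_zeros_halve [TopologicalSpace M] [T1Space M]
    (hcont : Continuous φ) (h0 : φ 0 ≠ 0) (hφ : ∀ s, φ (2 * s) = 0 → φ s = 0) (t : ℝ) :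
    φ t ≠ 0 := fun ht =>
  h0 <| (isClosed_singleton.preimage hcont).mem_of_tendsto
    (tendsto_div_two_pow_atTop_nhds_zero t)
    (Eventually.of_forall (apply_div_two_pow_eq_zero hφ ht))

end HalvingZeros

theorem charFun_funEq_nonvanishing_general
    (φ : ℝ → ℂ) (hcont : Continuous φ) (h0 : φ 0 = 1)
    (heq : ∀ t : ℝ, φ (2 * t) = φ t ^ 3 * starRingEnd ℂ (φ t)) :
    ∀ t : ℝ, φ t ≠ 0 := by
  refine hcont.apply_ne_zero_of_zeros_halve (h0 ▸ one_ne_zero) fun s hs => ?_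
  rw [heq, mul_eq_zero, map_eq_zero, pow_eq_zero_iff three_ne_zero, or_self] at hs
  exact hs

theorem charFun_funEq_nonvanishing
    (φ : ℝ → ℂ) (hcont : Continuous φ) (h0 : φ 0 = 1)
    (hbd : ∀ t : ℝ, ‖φ t‖ ≤ 1)
    (heq : ∀ t : ℝ, φ (2 * t) = φ t ^ 3 * starRingEnd ℂ (φ t)) :
    ∀ t : ℝ, φ t ≠ 0 :=
  charFun_funEq_nonvanishing_general φ hcont h0 heq
end

section
/- Let γ : ℝ → ℂ be continuous with γ(0) = 1, satisfying γ(2t) = γ(t)² for all t, and γ(t) = 1 + o(t²) as t → 0. Then γ(t) = 1 for all t ∈ ℝ. -/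
/-!
Iterating the functional equation gives `γ t = γ (t / 2ᵏ) ^ 2ᵏ`. For `N = 2ᵏ` and
`z = γ (t / 2ᵏ)` one has `‖z ^ N - 1‖ ≤ exp (N ‖z - 1‖) - 1`, and
`N (z - 1) = ((z - 1) / s²) · t² / 2ᵏ` with `s = t / 2ᵏ` tends to `0` because `γ s - 1 = o(s²)`.
So `‖γ t - 1‖` is bounded by a sequence tending to `0`.
-/

open Filter Topology

lemma norm_pow_sub_one_le_exp_sub_one {R : Type*} [SeminormedRing R] (z : R) (n : ℕ) :
    ‖z ^ n - 1‖ ≤ Real.exp (n * ‖z - 1‖) - 1 := by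
  induction n with
  | zero => simp
  | succ n ih =>
    have hsplit : z ^ (n + 1) - 1 = (z ^ n - 1) * (z - 1) + (z ^ n - 1) + (z - 1) := by
      noncomm_ring
    have hexp_add : Real.exp ((n + 1 : ℕ) * ‖z - 1‖) =
        Real.exp (n * ‖z - 1‖) * Real.exp ‖z - 1‖ := by
      rw [Nat.cast_succ, add_one_mul, Real.exp_add]
    calc ‖z ^ (n + 1) - 1‖ ≤ ‖z ^ n - 1‖ * ‖z - 1‖ + ‖z ^ n - 1‖ + ‖z - 1‖ := by
          rw [hsplit]
          grw [norm_add_le, norm_add_le, norm_mul_le]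
      _ = (‖z ^ n - 1‖ + 1) * (‖z - 1‖ + 1) - 1 := by ring
      _ ≤ Real.exp (n * ‖z - 1‖) * Real.exp ‖z - 1‖ - 1 := by
          gcongr
          · linarith
          · exact Real.add_one_le_exp _
      _ = Real.exp ((n + 1 : ℕ) * ‖z - 1‖) - 1 := by rw [hexp_add]

lemma eq_pow_two_pow_of_apply_two_mul {M : Type*} [Monoid M] {γ : ℝ → M}
    (heq : ∀ t, γ (2 * t) = γ t ^ 2) (t : ℝ) (n : ℕ) : γ t = γ (t / 2 ^ n) ^ 2 ^ n := by
  induction n with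
  | zero => simp
  | succ n ih =>
    have hhalf : γ (t / 2 ^ n) = γ (t / 2 ^ (n + 1)) ^ 2 := by
      rw [← heq]
      congr 1
      field_simp
      ring
    rw [ih, hhalf, ← pow_mul, ← pow_succ']

lemma tendsto_two_pow_mul_apply_div_two_pow {f : ℝ → ℂ}
    (hf : Tendsto (fun t : ℝ => f t / (t : ℂ) ^ 2) (𝓝[≠] 0) (𝓝 0)) {t : ℝ} (ht : t ≠ 0) :
    Tendsto (fun k : ℕ => (2 : ℂ) ^ k * f (t / 2 ^ k)) atTop (𝓝 0) := by
  have hhalf : Tendsto (fun k : ℕ => t / 2 ^ k) atTop (𝓝[≠] 0) := by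
    refine tendsto_nhdsWithin_iff.2 ⟨?_, Eventually.of_forall fun k => by simp [ht]⟩
    simpa [div_eq_mul_inv] using
      (tendsto_pow_atTop_nhds_zero_of_lt_one (by norm_num : (0 : ℝ) ≤ 2⁻¹)
        (by norm_num)).const_mul t
  have hscale : Tendsto (fun k : ℕ => (t : ℂ) ^ 2 * 2⁻¹ ^ k) atTop (𝓝 0) := by
    simpa using (tendsto_pow_atTop_nhds_zero_of_norm_lt_one
      (by norm_num : ‖(2⁻¹ : ℂ)‖ < 1)).const_mul ((t : ℂ) ^ 2)
  have hfactor : ∀ k : ℕ, (2 : ℂ) ^ k * f (t / 2 ^ k) =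
      f (t / 2 ^ k) / ((t / 2 ^ k : ℝ) : ℂ) ^ 2 * ((t : ℂ) ^ 2 * 2⁻¹ ^ k) := by
    intro k
    have htc : (t : ℂ) ≠ 0 := Complex.ofReal_ne_zero.2 ht
    rw [Complex.ofReal_div, Complex.ofReal_pow, Complex.ofReal_ofNat, inv_pow]
    field_simp
  simpa [hfactor] using (hf.comp hhalf).mul hscale

theorem gamma_funEq_eq_one_general
    (γ : ℝ → ℂ) (h0 : γ 0 = 1)
    (heq : ∀ t : ℝ, γ (2 * t) = γ t ^ 2)
    (hexp : Filter.Tendsto (fun t : ℝ => (γ t - 1) / (t : ℂ) ^ 2)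
      (nhdsWithin 0 {0}ᶜ) (nhds 0)) :
    ∀ t : ℝ, γ t = 1 := by
  intro t
  rcases eq_or_ne t 0 with rfl | ht
  · exact h0
  have hsmall := tendsto_two_pow_mul_apply_div_two_pow hexp ht
  have hbound : ∀ k : ℕ,
      ‖γ t - 1‖ ≤ Real.exp ‖(2 : ℂ) ^ k * (γ (t / 2 ^ k) - 1)‖ - 1 := by
    intro k
    rw [eq_pow_two_pow_of_apply_two_mul heq t k, norm_mul, norm_pow, RCLike.norm_two]
    exact_mod_cast norm_pow_sub_one_le_exp_sub_one (γ (t / 2 ^ k)) (2 ^ k)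
  have hlim : Tendsto (fun k : ℕ => Real.exp ‖(2 : ℂ) ^ k * (γ (t / 2 ^ k) - 1)‖ - 1)
      atTop (𝓝 0) := by
    have h := ((Real.continuous_exp.tendsto' 0 1 Real.exp_zero).comp
      (tendsto_zero_iff_norm_tendsto_zero.1 hsmall)).sub_const 1
    simpa using h
  exact sub_eq_zero.1 (norm_le_zero_iff.1 (ge_of_tendsto' hlim hbound))

theorem gamma_funEq_eq_one
    (γ : ℝ → ℂ) (hcont : Continuous γ) (h0 : γ 0 = 1)
    (heq : ∀ t : ℝ, γ (2 * t) = γ t ^ 2)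
    (hexp : Filter.Tendsto (fun t : ℝ => (γ t - 1) / (t : ℂ) ^ 2)
      (nhdsWithin 0 {0}ᶜ) (nhds 0)) :
    ∀ t : ℝ, γ t = 1 :=
  gamma_funEq_eq_one_general γ h0 heq hexp
end
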